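/- arXiv:2302.03334 — 2 statements merged into one kernel-verified Lean document; each statement's English description precedes it below -/
import Mathlib

section
/- The set of intrinsic mode function souls S_{μ0,μ1,μ2} is convex: if (a1,φ1) and (a2,φ2) belong to S_{μ0,μ1,μ2} and q ∈ [0,1], then ((1-q)·a1 + q·a2, (1-q)·φ1 + q·φ2) also belongs to S_{μ0,μ1,μ2}. -/
/-- Intrinsic mode function soul (IMFS) with characteristic (μ0, μ1, μ2). -/
def IMFS (μ0 μ1 μ2 : ℝ) (a φ : ℝ → ℝ) : Prop :=
  ContDiff ℝ 1 a ∧ ContDiff ℝ 2 φ ∧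
  (∀ t : ℝ, 0 ≤ a t) ∧ (∀ t : ℝ, μ0 ≤ deriv φ t) ∧
  (∀ t : ℝ, |deriv a t| ≤ μ1 * |deriv φ t|) ∧
  (∀ t : ℝ, |deriv (deriv φ) t| ≤ μ2 * |deriv φ t|)

/-! Every condition defining an IMFS is preserved by convex combinations: the regularity and
the lower bound on `φ'` directly, and the two derivative bounds because `φ' ≥ μ0 ≥ 0` makes
`|φ'| = φ'` linear, so each bound says that `(u', φ')` (with `u = a` or `u = φ'`) lies pointwise
in the convex cone `|x| ≤ c * y`. -/

theorem deriv_smul_add_smul {𝕜 F : Type*} [NontriviallyNormedField 𝕜] [NormedAddCommGroup F]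
    [NormedSpace 𝕜 F] {f g : 𝕜 → F} (hf : Differentiable 𝕜 f) (hg : Differentiable 𝕜 g)
    (s r : 𝕜) : deriv (s • f + r • g) = s • deriv f + r • deriv g := by
  funext x
  rw [deriv_add ((hf.const_smul s) x) ((hg.const_smul r) x), deriv_const_smul_field,
    deriv_const_smul_field]
  rfl

theorem abs_mul_add_mul_le_mul_abs {c s r x₁ x₂ y₁ y₂ : ℝ} (hs : 0 ≤ s) (hr : 0 ≤ r)
    (hy₁ : 0 ≤ y₁) (hy₂ : 0 ≤ y₂) (h₁ : |x₁| ≤ c * |y₁|) (h₂ : |x₂| ≤ c * |y₂|) :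
    |s * x₁ + r * x₂| ≤ c * |s * y₁ + r * y₂| := by
  rw [abs_of_nonneg hy₁] at h₁
  rw [abs_of_nonneg hy₂] at h₂
  calc |s * x₁ + r * x₂|
      ≤ s * |x₁| + r * |x₂| := by
        simpa only [abs_mul, abs_of_nonneg hs, abs_of_nonneg hr] using abs_add_le (s * x₁) (r * x₂)
    _ ≤ s * (c * y₁) + r * (c * y₂) := by gcongr
    _ = c * |s * y₁ + r * y₂| := by
        rw [abs_of_nonneg (by positivity)]
        ring

theorem convex_setOf_IMFS {μ0 μ1 μ2 : ℝ} (hμ0 : 0 ≤ μ0) :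
    Convex ℝ {p : (ℝ → ℝ) × (ℝ → ℝ) | IMFS μ0 μ1 μ2 p.1 p.2} := by
  rintro ⟨a₁, φ₁⟩ ⟨ha₁, hφ₁, ha₁_nonneg, hφ₁_ge, ha₁_le, hφ₁_le⟩
    ⟨a₂, φ₂⟩ ⟨ha₂, hφ₂, ha₂_nonneg, hφ₂_ge, ha₂_le, hφ₂_le⟩ s r hs hr hsr
  show IMFS μ0 μ1 μ2 (s • a₁ + r • a₂) (s • φ₁ + r • φ₂)
  have hφ₁_nonneg (t : ℝ) : 0 ≤ deriv φ₁ t := hμ0.trans (hφ₁_ge t)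
  have hφ₂_nonneg (t : ℝ) : 0 ≤ deriv φ₂ t := hμ0.trans (hφ₂_ge t)
  have hda := deriv_smul_add_smul (ha₁.differentiable one_ne_zero)
    (ha₂.differentiable one_ne_zero) s r
  have hdφ := deriv_smul_add_smul (hφ₁.differentiable (by norm_num))
    (hφ₂.differentiable (by norm_num)) s r
  have hddφ : deriv (deriv (s • φ₁ + r • φ₂)) = s • deriv (deriv φ₁) + r • deriv (deriv φ₂) := by
    rw [hdφ, deriv_smul_add_smul hφ₁.differentiable_deriv_two hφ₂.differentiable_deriv_two]
  refine ⟨(ha₁.const_smul s).add (ha₂.const_smul r), (hφ₁.const_smul s).add (hφ₂.const_smul r),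
    fun t => ?_, fun t => ?_, fun t => ?_, fun t => ?_⟩
  · exact convex_Ici (0 : ℝ) (ha₁_nonneg t) (ha₂_nonneg t) hs hr hsr
  · rw [hdφ]
    exact convex_Ici μ0 (hφ₁_ge t) (hφ₂_ge t) hs hr hsr
  · rw [hda, hdφ]
    exact abs_mul_add_mul_le_mul_abs hs hr (hφ₁_nonneg t) (hφ₂_nonneg t) (ha₁_le t) (ha₂_le t)
  · rw [hddφ, hdφ]
    exact abs_mul_add_mul_le_mul_abs hs hr (hφ₁_nonneg t) (hφ₂_nonneg t) (hφ₁_le t) (hφ₂_le t)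

theorem imfs_convex_general (μ0 μ1 μ2 : ℝ) (hμ0 : 0 < μ0)
    (a1 φ1 a2 φ2 : ℝ → ℝ)
    (h1 : IMFS μ0 μ1 μ2 a1 φ1) (h2 : IMFS μ0 μ1 μ2 a2 φ2)
    (q : ℝ) (hq : q ∈ Set.Icc (0:ℝ) 1) :
    IMFS μ0 μ1 μ2 (fun t => (1 - q) * a1 t + q * a2 t)
      (fun t => (1 - q) * φ1 t + q * φ2 t) :=
  convex_setOf_IMFS hμ0.le (x := (a1, φ1)) h1 (y := (a2, φ2)) h2 (sub_nonneg.2 hq.2) hq.1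
    (sub_add_cancel 1 q)

theorem imfs_convex (μ0 μ1 μ2 : ℝ) (hμ0 : 0 < μ0) (hμ1 : 0 < μ1) (hμ2 : 0 < μ2)
    (a1 φ1 a2 φ2 : ℝ → ℝ)
    (h1 : IMFS μ0 μ1 μ2 a1 φ1) (h2 : IMFS μ0 μ1 μ2 a2 φ2)
    (q : ℝ) (hq : q ∈ Set.Icc (0:ℝ) 1) :
    IMFS μ0 μ1 μ2 (fun t => (1 - q) * a1 t + q * a2 t)
      (fun t => (1 - q) * φ1 t + q * φ2 t) :=
  imfs_convex_general μ0 μ1 μ2 hμ0 a1 φ1 a2 φ2 h1 h2 q hq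
end

section
/- Let a ∈ C²(ℝ,ℝ) with a(t) > 0 for all t and φ ∈ C²(ℝ,ℝ) with φ'(t) ≠ 0 for all t. Define A := a'/a and Ω := 1/(φ')². Then the second-order IMF differential operator D_{(a,φ)} := Ω·D² + (-2·Ω·A + ½·Ω')·D¹ + (Ω·(A² - A') - ½·Ω'·A + 1)·D⁰ annihilates u(t) := a(t)·cos(φ(t)), i.e. D_{(a,φ)} u ≡ 0. -/
/-! Expanding `u = a cos φ` to second order, the coefficients of `sin φ` and of `cos φ` vanish
separately. In the `cos φ` coefficient the `a''`- and `a'`-terms cancel because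
`A' = a''/a - A²`, leaving `a (1 - Ω φ'²) = 0`; the `sin φ` coefficient reduces to
`-a (Ω φ'' + ½ Ω' φ')`, which is `0` because `Ω' = -2 φ''/φ'³`. -/

open Real

section

variable {a φ : ℝ → ℝ} {x : ℝ}

theorem hasDerivAt_mul_cos_comp {a' φ' : ℝ} (ha : HasDerivAt a a' x) (hφ : HasDerivAt φ φ' x) :
    HasDerivAt (fun y => a y * cos (φ y)) (a' * cos (φ x) - a x * sin (φ x) * φ') x :=
  (ha.fun_mul hφ.cos).congr_deriv (by ring)

theorem deriv_mul_cos_comp (ha : Differentiable ℝ a) (hφ : Differentiable ℝ φ) :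
    deriv (fun y => a y * cos (φ y))
      = fun x => deriv a x * cos (φ x) - a x * sin (φ x) * deriv φ x :=
  funext fun x => (hasDerivAt_mul_cos_comp (ha x).hasDerivAt (hφ x).hasDerivAt).deriv

theorem deriv_deriv_mul_cos_comp (ha : Differentiable ℝ a) (hφ : Differentiable ℝ φ)
    (ha' : DifferentiableAt ℝ (deriv a) x) (hφ' : DifferentiableAt ℝ (deriv φ) x) :
    deriv (deriv (fun y => a y * cos (φ y))) x
      = deriv (deriv a) x * cos (φ x) - 2 * deriv a x * sin (φ x) * deriv φ x
        - a x * cos (φ x) * deriv φ x ^ 2 - a x * sin (φ x) * deriv (deriv φ) x := by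
  rw [deriv_mul_cos_comp ha hφ]
  exact ((hasDerivAt_mul_cos_comp ha'.hasDerivAt (hφ x).hasDerivAt).sub
    (((ha x).hasDerivAt.fun_mul (hφ x).hasDerivAt.sin).fun_mul hφ'.hasDerivAt)).deriv.trans (by ring)

theorem deriv_one_div_sq (hφ : DifferentiableAt ℝ φ x) (hx : φ x ≠ 0) :
    deriv (fun y => 1 / φ y ^ 2) x = -2 * deriv φ x / φ x ^ 3 := by
  rw [deriv_const_div 1 (hφ.fun_pow 2) (pow_ne_zero 2 hx), deriv_fun_pow hφ 2]
  field_simp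
  ring

end

/-- The second-order IMF differential operator annihilates `u = a·cos(φ)`. -/
theorem imf_diffop_annihilates (a φ : ℝ → ℝ)
    (ha : ContDiff ℝ 2 a) (hφ : ContDiff ℝ 2 φ)
    (hapos : ∀ t, 0 < a t) (hφ' : ∀ t, deriv φ t ≠ 0) :
    ∀ t : ℝ,
      (fun t => 1 / (deriv φ t) ^ 2) t *
          deriv (deriv (fun x => a x * Real.cos (φ x))) t
        + (-2 * (fun t => 1 / (deriv φ t) ^ 2) t * (fun t => deriv a t / a t) t
            + (1 / 2) * deriv (fun t => 1 / (deriv φ t) ^ 2) t) *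
          deriv (fun x => a x * Real.cos (φ x)) t
        + ((fun t => 1 / (deriv φ t) ^ 2) t *
              (((fun t => deriv a t / a t) t) ^ 2 - deriv (fun t => deriv a t / a t) t)
            - (1 / 2) * deriv (fun t => 1 / (deriv φ t) ^ 2) t *
              (fun t => deriv a t / a t) t
            + 1) * (a t * Real.cos (φ t)) = 0 := by
  intro t
  have ha₁ := ha.differentiable two_ne_zero
  have hφ₁ := hφ.differentiable two_ne_zero
  have ha₂ := ha.differentiable_deriv_two
  have hφ₂ := hφ.differentiable_deriv_two
  have hat := (hapos t).ne'
  have hφt := hφ' t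
  beta_reduce
  rw [deriv_deriv_mul_cos_comp ha₁ hφ₁ (ha₂ t) (hφ₂ t), deriv_mul_cos_comp ha₁ hφ₁,
    deriv_fun_div (ha₂ t) (ha₁ t) hat, deriv_one_div_sq (hφ₂ t) hφt]
  field_simp
  ring
end
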